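/- arXiv:1811.06389 — 5 statements merged into one kernel-verified Lean document; each statement's English description precedes it below -/
import Mathlib

section
/- Let H be a bipartite graph on vertex classes X and Y, each of size n, where n is even, and let M = {M_1, …, M_m} be a partition of the edge set of H into perfect matchings. Then the graph G[M] on vertex set {1, …, m}, in which i and j are adjacent if and only if M_i ∪ M_j is a Hamilton cycle of H, is bipartite (equivalently, contains no odd cycle). -/
open SimpleGraph

/-- The hypercube graph `Q_d`: vertices are subsets of `{1,…,d}`, two subsets adjacent
iff they differ in exactly one element. -/
def cube (d : ℕ) : SimpleGraph (Finset (Fin d)) where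
  Adj u v := (symmDiff u v).card = 1
  symm := ⟨fun u v h => by rwa [symmDiff_comm]⟩
  loopless := ⟨fun u h => by simp [symmDiff_self] at h⟩

/-- `M` is a perfect matching of `G` (as a set of edges): `M` consists of edges of `G`
and every vertex lies in a unique edge of `M`. -/
def IsPM {V : Type*} (G : SimpleGraph V) (M : Set (Sym2 V)) : Prop :=
  M ⊆ G.edgeSet ∧ ∀ v : V, ∃! e, e ∈ M ∧ v ∈ e

/-- `M` is a 1-factorization of `G`: a partition of the edge set of `G` into
perfect matchings. -/
def IsFactorization {V : Type*} {ι : Type*} (G : SimpleGraph V) (M : ι → Set (Sym2 V)) : Prop :=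
  (∀ i, IsPM G (M i)) ∧ (∀ i j, i ≠ j → Disjoint (M i) (M j)) ∧ (⋃ i, M i) = G.edgeSet

/-- The edge set `E` forms a Hamilton cycle: there is a Hamiltonian cycle in the graph
with edge set `E` which uses every edge of `E`. -/
def IsHamCycleSet {V : Type*} [DecidableEq V] (E : Set (Sym2 V)) : Prop :=
  ∃ (v : V) (w : (SimpleGraph.fromEdgeSet E).Walk v v),
    w.IsHamiltonianCycle ∧ ∀ e ∈ E, e ∈ w.edges

/-!
Let `X` be one side of the bipartition. Each perfect matching `M k` is a bijection
`e k : X ≃ V \ X`; fixing one bijection `g : X ≃ V \ X`, colour `k` by the sign of the permutation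
`g⁻¹ ∘ e k` of `X`. The colours of `i` and `j` differ iff `(e i)⁻¹ ∘ e j` is odd. This permutation
is the restriction to `X` of `a ∘ b`, where `a`, `b` are the involutions of `V` swapping matched
vertices, and the components of `M i ∪ M j` are the orbits of `⟨a, b⟩`. So if `M i ∪ M j` is a
Hamilton cycle, `(e i)⁻¹ ∘ e j` is a single cycle through all `n` points of `X`, an odd permutation
since `n` is even.
-/

namespace Equiv.Perm

variable {α : Type*}

theorem sameCycle_mul_or_of_reflTransGen {a b : Perm α}
    (ha : Function.Involutive a) (hb : Function.Involutive b) {u v : α}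
    (h : Relation.ReflTransGen (fun x y => y = a x ∨ y = b x) u v) :
    (a * b).SameCycle u v ∨ (a * b).SameCycle u (b v) := by
  induction h with
  | refl => exact .inl (.refl _ _)
  | @tail v w _ hvw ih =>
    rcases hvw with rfl | rfl
    · have hav : a v = (a * b) (b v) := by rw [mul_apply, hb]
      have hbav : b (a v) = (a * b).symm v := by rw [eq_symm_apply, mul_apply, hb, ha]
      rw [hbav, hav, sameCycle_apply_right, sameCycle_symm_apply_right]
      exact ih.symm
    · rw [hb]
      exact ih.symm

theorem SameCycle.mem_iff {f : Perm α} {s : Set α} (hs : ∀ x, f x ∈ s ↔ x ∈ s) {x y : α}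
    (h : f.SameCycle x y) : x ∈ s ↔ y ∈ s := by
  have mem_of_mem : ∀ {x y}, f.SameCycle x y → x ∈ s → y ∈ s := by
    rintro x _ ⟨k, rfl⟩ hx
    simpa [subtypePerm_zpow] using ((f.subtypePerm hs ^ k) ⟨x, hx⟩).2
  exact ⟨mem_of_mem h, mem_of_mem h.symm⟩

theorem sign_eq_neg_one_of_forall_sameCycle [Fintype α] [DecidableEq α] {f : Perm α}
    (hf : ∀ x y, f.SameCycle x y) (heven : Even (Fintype.card α)) (hpos : 0 < Fintype.card α) :
    sign f = -1 := by
  obtain ⟨x⟩ := Fintype.card_pos_iff.mp hpos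
  have hx : f x ≠ x := by
    intro hfix
    have : Subsingleton α :=
      ⟨fun y z => ((hf x y).eq_of_left hfix).symm.trans ((hf x z).eq_of_left hfix)⟩
    have := Fintype.card_le_one_iff_subsingleton.mpr this
    obtain ⟨k, hk⟩ := heven
    omega
  have hfree : ∀ y, f y ≠ y := fun y => ((hf x y).apply_eq_self_iff.not).mp hx
  have hsupp : f.support = Finset.univ :=
    Finset.eq_univ_of_forall fun y => mem_support.mpr (hfree y)
  have hcycle : f.IsCycle := ⟨x, hx, fun y _ => hf x y⟩
  rw [hcycle.sign, hsupp, Finset.card_univ, heven.neg_one_pow]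

theorem sign_trans_symm_ne {β : Type*} [Fintype α] [DecidableEq α] {e₁ e₂ : α ≃ β} (g : α ≃ β)
    (h : sign (e₂.trans e₁.symm) = -1) : sign (e₁.trans g.symm) ≠ sign (e₂.trans g.symm) := by
  intro heq
  have hquot : (e₁.trans g.symm)⁻¹ * e₂.trans g.symm = e₂.trans e₁.symm := by
    ext x; simp
  have := congrArg sign hquot
  rw [map_mul, map_inv, heq, inv_mul_cancel, h] at this
  exact absurd this (by decide)

end Equiv.Perm

open Equiv Finset

theorem IsHamCycleSet.reachable {V : Type*} [DecidableEq V] {E : Set (Sym2 V)}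
    (h : IsHamCycleSet E) (u v : V) : (fromEdgeSet E).Reachable u v := by
  obtain ⟨_, w, hw, -⟩ := h
  exact (w.takeUntil u (hw.mem_support u)).reachable.symm.trans
    (w.takeUntil v (hw.mem_support v)).reachable

namespace IsPM

variable {V : Type*} {G : SimpleGraph V} {M N : Set (Sym2 V)} {X : Finset V}

theorem exists_mk_mem (hM : IsPM G M) (v : V) : ∃ u, s(v, u) ∈ M := by
  obtain ⟨e, ⟨he, hve⟩, -⟩ := hM.2 v
  exact ⟨Sym2.Mem.other hve, by rwa [Sym2.other_spec]⟩

noncomputable def mate (hM : IsPM G M) (v : V) : V :=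
  (hM.exists_mk_mem v).choose

theorem mk_mate_mem (hM : IsPM G M) (v : V) : s(v, hM.mate v) ∈ M :=
  (hM.exists_mk_mem v).choose_spec

theorem eq_mate_of_mk_mem (hM : IsPM G M) {u v : V} (h : s(v, u) ∈ M) : u = hM.mate v := by
  obtain ⟨_, -, huniq⟩ := hM.2 v
  exact Sym2.congr_right.mp <|
    (huniq _ ⟨h, Sym2.mem_mk_left _ _⟩).trans
      (huniq _ ⟨hM.mk_mate_mem v, Sym2.mem_mk_left _ _⟩).symm

theorem adj_mate (hM : IsPM G M) (v : V) : G.Adj v (hM.mate v) :=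
  hM.1 (hM.mk_mate_mem v)

theorem mate_involutive (hM : IsPM G M) : Function.Involutive hM.mate := fun v =>
  (hM.eq_mate_of_mk_mem (Sym2.eq_swap ▸ hM.mk_mate_mem v)).symm

noncomputable def matePerm (hM : IsPM G M) : Perm V :=
  hM.mate_involutive.toPerm

theorem reflTransGen_of_reachable_union (hM : IsPM G M) (hN : IsPM G N) {u v : V}
    (h : (fromEdgeSet (M ∪ N)).Reachable u v) :
    Relation.ReflTransGen (fun x y => y = hM.matePerm x ∨ y = hN.matePerm x) u v := by
  rw [reachable_iff_reflTransGen] at h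
  refine Relation.ReflTransGen.mono (fun x y (hxy : (fromEdgeSet (M ∪ N)).Adj x y) => ?_) _ _ h
  obtain ⟨hxy | hxy, -⟩ := hxy
  · exact .inl (hM.eq_mate_of_mk_mem hxy)
  · exact .inr (hN.eq_mate_of_mk_mem hxy)

noncomputable def crossEquiv (hM : IsPM G M) (hX : ∀ u v, G.Adj u v → (u ∈ X ↔ v ∉ X)) :
    {v // v ∈ X} ≃ {v // v ∉ X} :=
  hM.matePerm.subtypeEquiv fun v => hX _ _ (hM.adj_mate v)

theorem mate_mem_iff (hM : IsPM G M) (hX : ∀ u v, G.Adj u v → (u ∈ X ↔ v ∉ X))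
    {v : V} : hM.mate v ∈ X ↔ v ∉ X := by
  rw [hX _ _ (hM.adj_mate v), not_not]

theorem sign_crossEquiv_trans_symm [DecidableEq V] (hM : IsPM G M) (hN : IsPM G N)
    (hX : ∀ u v, G.Adj u v → (u ∈ X ↔ v ∉ X)) (heven : Even #X) (hham : IsHamCycleSet (M ∪ N)) :
    Perm.sign ((hN.crossEquiv hX).trans (hM.crossEquiv hX).symm) = -1 := by
  set p := hM.matePerm * hN.matePerm
  have hpX : ∀ v, p v ∈ X ↔ v ∈ X := fun v => by
    change hM.mate (hN.mate v) ∈ X ↔ v ∈ X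
    rw [hM.mate_mem_iff hX, hN.mate_mem_iff hX, not_not]
  have hp : (hN.crossEquiv hX).trans (hM.crossEquiv hX).symm = p.subtypePerm hpX := by
    ext; simp [crossEquiv, matePerm, p]
  rw [hp]
  apply Perm.sign_eq_neg_one_of_forall_sameCycle
  · rintro ⟨x, hx⟩ ⟨y, hy⟩
    rw [Perm.sameCycle_subtypePerm]
    have hxy := hM.reflTransGen_of_reachable_union hN (hham.reachable x y)
    refine (Perm.sameCycle_mul_or_of_reflTransGen hM.mate_involutive hN.mate_involutive
      hxy).resolve_right fun h => ?_
    exact (hX _ _ (hN.adj_mate y)).mp hy ((h.mem_iff hpX).mp hx)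
  · simpa using heven
  · obtain ⟨v, -⟩ := hham
    rw [Fintype.card_pos_iff]
    by_cases hv : v ∈ X
    · exact ⟨⟨v, hv⟩⟩
    · exact ⟨⟨_, (hM.mate_mem_iff hX).mpr hv⟩⟩

end IsPM

/-- If `H` is a bipartite graph on vertex classes `X`, `Y`, each of even size `n`,
and `M₁, …, Mₘ` is a 1-factorization of `H`, then the graph `G[M]` on `{1, …, m}`,
with `i ~ j` iff `M_i ∪ M_j` is a Hamilton cycle, is bipartite (2-colorable). -/
theorem statement0 {V : Type*} [Fintype V] [DecidableEq V] (G : SimpleGraph V)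
    (X Y : Finset V) (n : ℕ) (hn : Even n) (hX : X.card = n) (hY : Y.card = n)
    (hpart : ∀ v : V, (v ∈ X ∧ v ∉ Y) ∨ (v ∈ Y ∧ v ∉ X))
    (hbip : ∀ u v : V, G.Adj u v → (u ∈ X ∧ v ∈ Y) ∨ (u ∈ Y ∧ v ∈ X))
    (m : ℕ) (M : Fin m → Set (Sym2 V)) (hM : IsFactorization G M) :
    (SimpleGraph.fromRel (fun i j : Fin m => IsHamCycleSet (M i ∪ M j))).Colorable 2 := by
  have hY_iff : ∀ v, v ∉ X ↔ v ∈ Y := fun v => by rcases hpart v with h | h <;> tauto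
  have hcross : ∀ u v, G.Adj u v → (u ∈ X ↔ v ∉ X) := fun u v huv => by
    have := hY_iff u; have := hY_iff v; rcases hbip u v huv with h | h <;> tauto
  have hcard : Fintype.card {v // v ∈ X} = Fintype.card {v // v ∉ X} := by
    rw [Fintype.card_congr (subtypeEquivRight hY_iff), Fintype.card_coe, Fintype.card_coe, hX, hY]
  let g := Fintype.equivOfCardEq hcard
  let color (k : Fin m) : ℤˣ := Perm.sign (((hM.1 k).crossEquiv hcross).trans g.symm)
  have hcolor : ∀ {i j}, IsHamCycleSet (M i ∪ M j) → color i ≠ color j := fun hham =>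
    Perm.sign_trans_symm_ne g ((hM.1 _).sign_crossEquiv_trans_symm (hM.1 _) hcross (hX ▸ hn) hham)
  refine (Coloring.mk color ?_).colorable
  rintro i j ⟨-, hij | hji⟩
  · exact hcolor hij
  · exact (hcolor hji).symm
end

section
/- For every d ≥ 3, the hypercube Q_d has no perfect 1-factorization; that is, there is no partition of the edge set of Q_d into perfect matchings M_1, …, M_d such that M_i ∪ M_j is a Hamilton cycle for every pair i ≠ j. -/
open SimpleGraph

/-!
A perfect matching `M` is the same as a fixed-point-free involution `A` of the vertices moving
along the edges of `M`. If the graph is bipartite, the product `A * B` of the involutions of two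
perfect matchings preserves both colour classes, and when the union of the two matchings is a
Hamilton cycle it acts on each class as a single cycle of length `|V| / 2`. If `4 ∣ |V|` this
restriction is an odd permutation, so three perfect matchings with pairwise Hamiltonian unions
are impossible: on a colour class `(A * B) * (B * C) = A * C`, while the signs would give
`(-1) * (-1) = -1`. The cube `Q_d` is bipartite by the parity of `|s|` and has `2 ^ d` vertices.
-/

open Equiv

namespace IsPM

variable {V : Type*} {G : SimpleGraph V} {M : Set (Sym2 V)}

noncomputable def partner (hM : IsPM G M) (v : V) : V :=
  Sym2.Mem.other (hM.2 v).exists.choose_spec.2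

lemma partner_mem (hM : IsPM G M) (v : V) : s(v, hM.partner v) ∈ M := by
  rw [partner, Sym2.other_spec]
  exact (hM.2 v).exists.choose_spec.1

lemma partner_eq_of_mem (hM : IsPM G M) {v w : V} (h : s(v, w) ∈ M) : hM.partner v = w :=
  Sym2.congr_right.mp <|
    (hM.2 v).unique ⟨hM.partner_mem v, Sym2.mem_mk_left _ _⟩ ⟨h, Sym2.mem_mk_left _ _⟩

lemma partner_involutive (hM : IsPM G M) : Function.Involutive hM.partner := fun v =>
  hM.partner_eq_of_mem (Sym2.eq_swap ▸ hM.partner_mem v)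

lemma adj_partner (hM : IsPM G M) (v : V) : G.Adj v (hM.partner v) :=
  hM.1 (hM.partner_mem v)

noncomputable def partnerPerm (hM : IsPM G M) : Perm V := hM.partner_involutive.toPerm

@[simp]
lemma partnerPerm_apply (hM : IsPM G M) (v : V) : hM.partnerPerm v = hM.partner v := rfl

@[simp]
lemma partner_partner (hM : IsPM G M) (v : V) : hM.partner (hM.partner v) = v :=
  hM.partner_involutive v

lemma color_partner (hM : IsPM G M) (C : G.Coloring Bool) (v : V) :
    C (hM.partner v) = !C v :=
  Bool.eq_not.mpr (C.valid (hM.adj_partner v)).symm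

end IsPM

lemma Equiv.Perm.SameCycle.apply_eq_of_forall_apply_eq {α β : Type*} {f : Perm α} {g : α → β}
    (hg : ∀ x, g (f x) = g x) {x y : α} (h : f.SameCycle x y) : g x = g y := by
  obtain ⟨k, rfl⟩ := h
  let q := f.subtypePerm (p := fun z => g z = g x) fun z => by rw [hg]
  simpa [q] using ((q ^ k) ⟨x, Eq.refl _⟩).2.symm

lemma Equiv.Perm.sign_eq_neg_one_of_forall_sameCycle_s2 {α : Type*} [Fintype α] [DecidableEq α]
    [Nonempty α] {σ : Perm α} (hσ : ∀ x y, σ.SameCycle x y) (hα : Even (Fintype.card α)) :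
    Perm.sign σ = -1 := by
  have hfix : ∀ x, σ x ≠ x := by
    intro x hx
    have hall : ∀ y, y = x := fun y => by
      obtain ⟨k, rfl⟩ := hσ x y
      exact Perm.zpow_apply_eq_self_of_apply_eq_self hx k
    have : Fintype.card α ≤ 1 :=
      Fintype.card_le_one_iff.mpr fun a b => (hall a).trans (hall b).symm
    have : 0 < Fintype.card α := Fintype.card_pos
    obtain ⟨m, hm⟩ := hα
    omega
  obtain ⟨x⟩ := ‹Nonempty α›
  have hcycle : σ.IsCycle := ⟨x, hfix x, fun y _ => hσ x y⟩
  have hsupport : σ.support = Finset.univ :=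
    Finset.eq_univ_of_forall fun y => Perm.mem_support.mpr (hfix y)
  rw [hcycle.sign, hsupport, Finset.card_univ, hα.neg_one_pow]

section PairOfMatchings

variable {V : Type*} {G : SimpleGraph V} {MA MB : Set (Sym2 V)}

lemma IsPM.sameCycle_or_of_walk (hA : IsPM G MA) (hB : IsPM G MB) {x y : V}
    (w : (fromEdgeSet (MA ∪ MB)).Walk x y) :
    (hA.partnerPerm * hB.partnerPerm).SameCycle x y ∨
      (hA.partnerPerm * hB.partnerPerm).SameCycle (hA.partner x) y := by
  induction w with
  | nil => exact Or.inl (Perm.SameCycle.refl _ _)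
  | @cons x z y hxz _ ih =>
    set p := hA.partnerPerm * hB.partnerPerm
    rcases ((fromEdgeSet_adj _).mp hxz).1 with hAxz | hBxz
    · rw [← hA.partner_eq_of_mem hAxz, hA.partner_partner] at ih
      exact ih.symm
    · have hpx : p x = hA.partner z := by simp [p, ← hB.partner_eq_of_mem hBxz]
      have hpz : p z = hA.partner x := by simp [p, ← hB.partner_eq_of_mem hBxz]
      rw [← hpx, Perm.sameCycle_apply_left, ← Perm.sameCycle_apply_left (x := z), hpz] at ih
      exact ih.symm

variable [DecidableEq V]

lemma IsPM.sameCycle_of_isHamCycleSet (hA : IsPM G MA) (hB : IsPM G MB)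
    (hAB : IsHamCycleSet (MA ∪ MB)) (C : G.Coloring Bool) {x y : V} (hxy : C x = C y) :
    (hA.partnerPerm * hB.partnerPerm).SameCycle x y := by
  obtain ⟨_, w, hw, -⟩ := hAB
  have hx := hw.mem_support x
  have hy := hw.mem_support y
  refine (hA.sameCycle_or_of_walk hB
    ((w.takeUntil x hx).reverse.append (w.takeUntil y hy))).resolve_right fun h => ?_
  have hcolor := h.apply_eq_of_forall_apply_eq (g := C) fun z => by
    simp [hA.color_partner, hB.color_partner]
  simp [hA.color_partner, ← hxy] at hcolor

end PairOfMatchings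

section ColorClass

variable {V : Type*} {G : SimpleGraph V} (C : G.Coloring Bool) (b : Bool)
  {MA MB MC : Set (Sym2 V)}

noncomputable def IsPM.colorClassPerm (hA : IsPM G MA) (hB : IsPM G MB) :
    Perm {v // C v = b} :=
  (hA.partnerPerm * hB.partnerPerm).subtypePerm fun v => by
    simp [hA.color_partner, hB.color_partner]

lemma IsPM.colorClassPerm_mul (hA : IsPM G MA) (hB : IsPM G MB) (hC : IsPM G MC) :
    hA.colorClassPerm C b hB * hB.colorClassPerm C b hC = hA.colorClassPerm C b hC := by
  ext v
  exact congrArg hA.partner (hB.partner_partner _)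

lemma IsPM.card_eq_two_mul_card_colorClass [Fintype V] [DecidableEq V] {M : Set (Sym2 V)}
    (hM : IsPM G M) : Fintype.card V = 2 * Fintype.card {v // C v = b} := by
  have hswap : Fintype.card {v // C v = b} = Fintype.card {v // ¬C v = b} :=
    Fintype.card_congr <| hM.partnerPerm.subtypeEquiv fun v => by simp [hM.color_partner]
  have hcompl := Fintype.card_subtype_compl fun v => C v = b
  have hle := Fintype.card_subtype_le fun v => C v = b
  omega

/-- `A * B` acts on the colour class as a single cycle, of even length `|V| / 2`. -/
lemma IsPM.sign_colorClassPerm [Fintype V] [DecidableEq V] [Nonempty V]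
    (hV : 4 ∣ Fintype.card V) (hA : IsPM G MA) (hB : IsPM G MB)
    (hAB : IsHamCycleSet (MA ∪ MB)) : Perm.sign (hA.colorClassPerm C b hB) = -1 := by
  have hcard := hA.card_eq_two_mul_card_colorClass C b
  have : 0 < Fintype.card V := Fintype.card_pos
  have : Nonempty {v // C v = b} := Fintype.card_pos_iff.mp (by omega)
  refine Perm.sign_eq_neg_one_of_forall_sameCycle_s2 (fun x y => ?_) ?_
  · exact Perm.sameCycle_subtypePerm.mpr
      (hA.sameCycle_of_isHamCycleSet hB hAB C (x.2.trans y.2.symm))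
  · obtain ⟨k, hk⟩ := hV
    exact ⟨k, by omega⟩

end ColorClass

theorem not_isHamCycleSet_union_of_four_dvd_card {V : Type*} [Fintype V] [DecidableEq V]
    [Nonempty V] {G : SimpleGraph V} (C : G.Coloring Bool) {MA MB MC : Set (Sym2 V)}
    (hV : 4 ∣ Fintype.card V) (hA : IsPM G MA) (hB : IsPM G MB) (hC : IsPM G MC)
    (hAB : IsHamCycleSet (MA ∪ MB)) (hBC : IsHamCycleSet (MB ∪ MC)) :
    ¬IsHamCycleSet (MA ∪ MC) := by
  intro hAC
  have hsign := congrArg Perm.sign (hA.colorClassPerm_mul C true hB hC)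
  rw [map_mul, hA.sign_colorClassPerm C true hV hB hAB, hB.sign_colorClassPerm C true hV hC hBC,
    hA.sign_colorClassPerm C true hV hC hAC] at hsign
  exact absurd hsign (by decide)

lemma Finset.card_add_card_eq_card_symmDiff_add {α : Type*} [DecidableEq α] (u v : Finset α) :
    u.card + v.card = (symmDiff u v).card + 2 * (u ∩ v).card := by
  have hu := Finset.card_sdiff_add_card_inter u v
  have hv := Finset.card_sdiff_add_card_inter v u
  have huv : (symmDiff u v).card = (u \ v).card + (v \ u).card :=
    Finset.card_union_of_disjoint disjoint_sdiff_sdiff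
  rw [Finset.inter_comm v u] at hv
  omega

def cubeColoring (d : ℕ) : (cube d).Coloring Bool :=
  Coloring.mk (fun s => decide (Even s.card)) fun {u v} huv => by
    have hcard := Finset.card_add_card_eq_card_symmDiff_add u v
    have h1 : (symmDiff u v).card = 1 := huv
    simp only [ne_eq, decide_eq_decide, Nat.even_iff]
    omega

/-- For every `d ≥ 3`, the hypercube `Q_d` has no perfect 1-factorization. -/
theorem statement2 (d : ℕ) (hd : 3 ≤ d) :
    ¬ ∃ M : Fin d → Set (Sym2 (Finset (Fin d))),
        IsFactorization (cube d) M ∧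
        ∀ i j : Fin d, i ≠ j → IsHamCycleSet (M i ∪ M j) := by
  rintro ⟨M, ⟨hM, -, -⟩, hham⟩
  have hV : 4 ∣ Fintype.card (Finset (Fin d)) := by
    rw [Fintype.card_finset, Fintype.card_fin]
    exact pow_dvd_pow 2 (by omega : 2 ≤ d)
  let i : Fin d := ⟨0, by omega⟩
  let j : Fin d := ⟨1, by omega⟩
  let k : Fin d := ⟨2, by omega⟩
  exact not_isHamCycleSet_union_of_four_dvd_card (cubeColoring d) hV (hM i) (hM j) (hM k)
    (hham i j (by simp [i, j, Fin.ext_iff])) (hham j k (by simp [j, k, Fin.ext_iff]))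
    (hham i k (by simp [i, k, Fin.ext_iff]))
end

section
/- There is a 1-factorization M_1, M_2, M_3, M_4 of the hypercube Q_4 such that M_4 ∪ M_i is a Hamilton cycle for each i = 1, 2, 3, and M_i ∪ M_j is not a Hamilton cycle for any distinct i, j ∈ {1, 2, 3}; that is, the graph G[M] recording Hamilton-cycle pairs is isomorphic to the complete bipartite graph K_{3,1}. -/
open SimpleGraph

/-!
The four matchings are explicit, and their being a 1-factorization of `Q₄` is checked by
evaluation. A Hamilton cycle of `Q₄` has 16 edges, as many as `M_i ∪ M_4`, so any Hamiltonian
cycle of the graph with edge set `M_i ∪ M_4` uses all of its edges; such cycles are exhibited.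
For distinct `i, j ≤ 3`, `M_i ∪ M_j` is disconnected, witnessed by a set of six vertices closed
under its edges, and `M_i ∪ M_i = M_i` is a matching, hence disconnected as well.
-/

section HamCycleSet

variable {V : Type*} [DecidableEq V]

theorem isPM_of_card_filter_mem {G : SimpleGraph V} (M : Finset (Sym2 V))
    (hsub : ∀ e ∈ M, e ∈ G.edgeSet) (hcard : ∀ v, (M.filter (v ∈ ·)).card = 1) :
    IsPM G M := by
  refine ⟨hsub, fun v => ?_⟩
  obtain ⟨e, he⟩ := Finset.card_eq_one.mp (hcard v)
  have hmem : ∀ e', e' ∈ M ∧ v ∈ e' ↔ e' = e := fun e' => by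
    rw [← Finset.mem_singleton, ← he, Finset.mem_filter]
  exact ⟨e, (hmem e).mpr rfl, fun e' h => (hmem e').mp h⟩

theorem not_isHamCycleSet_of_isClosed {E : Set (Sym2 V)} (S : Set V)
    (hS : ∀ a b, s(a, b) ∈ E → a ∈ S → b ∈ S) {x y : V} (hx : x ∈ S) (hy : y ∉ S) :
    ¬IsHamCycleSet E := by
  rintro ⟨v, w, hw, -⟩
  obtain ⟨d, -, hd, hd'⟩ := ((w.takeUntil x (hw.mem_support x)).reverse.append
    (w.takeUntil y (hw.mem_support y))).exists_boundary_dart S hx hy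
  exact hd' (hS _ _ ((fromEdgeSet_adj E).mp d.adj).1 hd)

theorem not_isHamCycleSet_of_isDiag_map {α : Type*} (E : Finset (Sym2 V)) (f : V → α)
    (hf : ∀ e ∈ E, (e.map f).IsDiag) {x y : V} (hxy : f x ≠ f y) :
    ¬IsHamCycleSet (E : Set (Sym2 V)) :=
  not_isHamCycleSet_of_isClosed {a | f a = f x}
    (fun _ _ hab ha => (hf _ hab).symm.trans ha) rfl (Ne.symm hxy)

theorem IsPM.not_isHamCycleSet [Fintype V] {G : SimpleGraph V} {M : Set (Sym2 V)}
    (hM : IsPM G M) (hV : 2 < Fintype.card V) : ¬IsHamCycleSet M := by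
  obtain ⟨x⟩ : Nonempty V := Fintype.card_pos_iff.mp (by omega)
  obtain ⟨e, ⟨he, -⟩, -⟩ := hM.2 x
  induction e using Sym2.ind with | _ a b => ?_
  obtain ⟨y, -, hy⟩ : ∃ y ∈ Finset.univ, y ∉ ({a, b} : Finset V) :=
    Finset.exists_mem_notMem_of_card_lt_card ((Finset.card_le_two).trans_lt hV)
  refine not_isHamCycleSet_of_isClosed {c | c ∈ s(a, b)} (fun c d hcd hc => ?_)
    (Sym2.mem_mk_left a b) (by simpa using hy)
  rw [Set.mem_ofPred_eq, ← (hM.2 c).unique ⟨hcd, Sym2.mem_mk_left c d⟩ ⟨he, hc⟩]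
  exact Sym2.mem_mk_right c d

theorem exists_isHamiltonianCycle_of_isChain [Fintype V] {G : SimpleGraph V} (v : V) (l : List V)
    (hnd : (v :: l).Nodup) (hcard : l.length + 1 = Fintype.card V) (h3 : 3 ≤ Fintype.card V)
    (hchain : (v :: l ++ [v]).IsChain G.Adj) : ∃ p : G.Walk v v, p.IsHamiltonianCycle := by
  rw [List.cons_append] at hchain
  obtain ⟨p, hsupp⟩ : ∃ p : G.Walk v v, p.support = v :: (l ++ [v]) :=
    ⟨(Walk.ofSupport _ (List.cons_ne_nil _ _) hchain).copy rfl (by simp),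
      (Walk.support_copy _ _ _).trans (Walk.support_ofSupport _ _)⟩
  have hlength : p.length = Fintype.card V := by
    have := p.length_support
    rw [hsupp] at this
    simp only [List.length_cons, List.length_append, List.length_nil] at this
    omega
  have hp : ¬p.Nil := Walk.not_nil_iff_lt_length.mpr (by omega)
  refine ⟨p, Walk.isHamiltonianCycle_iff_isCycle_and_length_eq.mpr
    ⟨Walk.isCycle_iff_isPath_tail_and_le_length.mpr ⟨.mk' ?_, by omega⟩, hlength⟩⟩
  rw [Walk.support_tail_of_not_nil _ hp, hsupp, List.tail_cons, List.nodup_append_comm]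
  exact hnd

theorem isHamCycleSet_of_isHamiltonianCycle [Fintype V] (E : Finset (Sym2 V))
    (hE : E.card = Fintype.card V) {v : V} (w : (fromEdgeSet (E : Set (Sym2 V))).Walk v v)
    (hw : w.IsHamiltonianCycle) : IsHamCycleSet (E : Set (Sym2 V)) := by
  refine ⟨v, w, hw, fun e he => ?_⟩
  have hsub : w.edges.toFinset ⊆ E := fun e he' => by
    have := w.edges_subset_edgeSet (List.mem_toFinset.mp he')
    rw [edgeSet_fromEdgeSet] at this
    exact this.1
  have hcardw : w.edges.toFinset.card = E.card := by
    rw [List.toFinset_card_of_nodup hw.isCycle.edges_nodup, Walk.length_edges, hw.length_eq, hE]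
  rw [Finset.mem_coe, ← Finset.eq_of_subset_of_card_le hsub hcardw.ge] at he
  exact List.mem_toFinset.mp he

theorem isHamCycleSet_of_isChain [Fintype V] (E : Finset (Sym2 V)) (hE : E.card = Fintype.card V)
    (h3 : 3 ≤ Fintype.card V) (v : V) (l : List V) (hnd : (v :: l).Nodup)
    (hcard : l.length + 1 = Fintype.card V)
    (hchain : (v :: l ++ [v]).IsChain fun a b => s(a, b) ∈ E ∧ a ≠ b) :
    IsHamCycleSet (E : Set (Sym2 V)) :=
  let ⟨w, hw⟩ := exists_isHamiltonianCycle_of_isChain v l hnd hcard h3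
    (hchain.imp fun _ _ hab => (fromEdgeSet_adj _).mpr hab)
  isHamCycleSet_of_isHamiltonianCycle E hE w hw

end HamCycleSet

instance (d : ℕ) : DecidableRel (cube d).Adj := fun u v =>
  inferInstanceAs (Decidable ((symmDiff u v).card = 1))

/-- `cubeFactor k` is the matching `M_{k+1}`; in particular `cubeFactor 3` is `M_4`. -/
def cubeFactor : Fin 4 → Finset (Sym2 (Finset (Fin 4))) :=
  ![{s(∅, {2}), s({0}, {0, 3}), s({1}, {1, 2}), s({0, 1}, {0, 1, 3}), s({0, 2}, {0, 1, 2}),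
      s({3}, {1, 3}), s({2, 3}, {1, 2, 3}), s({0, 2, 3}, {0, 1, 2, 3})},
    {s(∅, {0}), s({1}, {1, 3}), s({0, 1}, {0, 1, 2}), s({2}, {2, 3}), s({0, 2}, {0, 2, 3}),
      s({1, 2}, {1, 2, 3}), s({3}, {0, 3}), s({0, 1, 3}, {0, 1, 2, 3})},
    {s(∅, {1}), s({0}, {0, 1}), s({2}, {0, 2}), s({1, 2}, {0, 1, 2}), s({3}, {2, 3}),
      s({0, 3}, {0, 2, 3}), s({1, 3}, {0, 1, 3}), s({1, 2, 3}, {0, 1, 2, 3})},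
    {s(∅, {3}), s({0}, {0, 2}), s({1}, {0, 1}), s({2}, {1, 2}), s({0, 1, 2}, {0, 1, 2, 3}),
      s({0, 3}, {0, 1, 3}), s({1, 3}, {1, 2, 3}), s({2, 3}, {0, 2, 3})}]

theorem isPM_cubeFactor (i : Fin 4) : IsPM (cube 4) (cubeFactor i) := by
  refine isPM_of_card_filter_mem _ ?_ ?_ <;> revert i
  · set_option maxRecDepth 10000 in decide
  · decide

theorem cubeFactor_isFactorization : IsFactorization (cube 4) fun i => cubeFactor i := by
  refine ⟨isPM_cubeFactor, fun i j hij => Finset.disjoint_coe.mpr ?_, ?_⟩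
  · revert i j
    decide
  · refine subset_antisymm (Set.iUnion_subset fun i => (isPM_cubeFactor i).1) fun e he => ?_
    induction e using Sym2.ind with | _ u v => ?_
    have hcover : ∀ u v, (cube 4).Adj u v → ∃ i, s(u, v) ∈ cubeFactor i := by decide
    simpa using hcover u v he

theorem card_finset_fin_four : Fintype.card (Finset (Fin 4)) = 16 := by
  simp [Fintype.card_finset]

theorem not_isHamCycleSet_cubeFactor (i : Fin 4) :
    ¬IsHamCycleSet (cubeFactor i : Set (Sym2 (Finset (Fin 4)))) :=
  (isPM_cubeFactor i).not_isHamCycleSet (by rw [card_finset_fin_four]; omega)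

/-- The vertices after `∅` along a Hamilton cycle of `M_{i+1} ∪ M_4`. -/
def hamCycle : Fin 3 → List (Finset (Fin 4)) :=
  ![[{3}, {1, 3}, {1, 2, 3}, {2, 3}, {0, 2, 3}, {0, 1, 2, 3}, {0, 1, 2}, {0, 2}, {0}, {0, 3},
      {0, 1, 3}, {0, 1}, {1}, {1, 2}, {2}],
    [{3}, {0, 3}, {0, 1, 3}, {0, 1, 2, 3}, {0, 1, 2}, {0, 1}, {1}, {1, 3}, {1, 2, 3}, {1, 2},
      {2}, {2, 3}, {0, 2, 3}, {0, 2}, {0}],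
    [{3}, {2, 3}, {0, 2, 3}, {0, 3}, {0, 1, 3}, {1, 3}, {1, 2, 3}, {0, 1, 2, 3}, {0, 1, 2},
      {1, 2}, {2}, {0, 2}, {0}, {0, 1}, {1}]]

theorem isHamCycleSet_cubeFactor_union_three {i : Fin 4} (hi : (i : ℕ) < 3) :
    IsHamCycleSet ((cubeFactor i : Set (Sym2 (Finset (Fin 4)))) ∪ cubeFactor 3) := by
  rw [← Finset.coe_union]
  refine isHamCycleSet_of_isChain _ ?_ (by rw [card_finset_fin_four]; omega) ∅
    (hamCycle ⟨i, hi⟩) ?_ ?_ ?_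
  all_goals (try rw [card_finset_fin_four]); revert i; decide

set_option maxRecDepth 10000 in
theorem not_isHamCycleSet_cubeFactor_union {i j : Fin 4} (hi : (i : ℕ) < 3) (hj : (j : ℕ) < 3) :
    ¬IsHamCycleSet ((cubeFactor i : Set (Sym2 (Finset (Fin 4)))) ∪ cubeFactor j) := by
  obtain rfl | hij := eq_or_ne i j
  · rw [Set.union_self]
    exact not_isHamCycleSet_cubeFactor i
  wlog hlt : i < j generalizing i j
  · rw [Set.union_comm]
    exact this hj hi hij.symm (hij.lt_or_gt.resolve_left hlt)
  rw [← Finset.coe_union]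
  fin_cases i <;> fin_cases j <;> try (simp at hlt hj; done)
  · exact not_isHamCycleSet_of_isDiag_map _
      (fun v => decide (v ∈
        ({{0, 1}, {0, 2}, {0, 1, 2}, {0, 1, 3}, {0, 2, 3}, {0, 1, 2, 3}} : Finset _)))
      (by decide) (x := {0, 1}) (y := ∅) (by decide)
  · exact not_isHamCycleSet_of_isDiag_map _
      (fun v => decide (v ∈
        ({∅, {1}, {2}, {0, 2}, {1, 2}, {0, 1, 2}} : Finset _)))
      (by decide) (x := ∅) (y := {0}) (by decide)
  · exact not_isHamCycleSet_of_isDiag_map _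
      (fun v => decide (v ∈
        ({{2}, {0, 2}, {3}, {0, 3}, {2, 3}, {0, 2, 3}} : Finset _)))
      (by decide) (x := {2}) (y := ∅) (by decide)

/-- There is a 1-factorization `M₁, M₂, M₃, M₄` of `Q₄` such that `M₄ ∪ M_i` is a
Hamilton cycle for `i = 1, 2, 3` while `M_i ∪ M_j` is not a Hamilton cycle for distinct
`i, j ∈ {1, 2, 3}`; i.e. `G[M]` is isomorphic to `K_{3,1}`. -/
theorem statement7 :
    ∃ M : Fin 4 → Set (Sym2 (Finset (Fin 4))),
      IsFactorization (cube 4) M ∧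
      ∀ i j : Fin 4,
        (IsHamCycleSet (M i ∪ M j) ↔ Xor' ((i : ℕ) < 3) ((j : ℕ) < 3)) := by
  refine ⟨fun i => cubeFactor i, cubeFactor_isFactorization, fun i j => ?_⟩
  have eq_three : ∀ k : Fin 4, ¬(k : ℕ) < 3 → k = 3 := fun k hk => Fin.ext (by omega)
  by_cases hi : (i : ℕ) < 3 <;> by_cases hj : (j : ℕ) < 3
  · exact iff_of_false (not_isHamCycleSet_cubeFactor_union hi hj) (by simp [Xor', hi, hj])
  · obtain rfl := eq_three j hj
    exact iff_of_true (isHamCycleSet_cubeFactor_union_three hi) (by simp [Xor', hi])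
  · obtain rfl := eq_three i hi
    exact iff_of_true (Set.union_comm _ _ ▸ isHamCycleSet_cubeFactor_union_three hj)
      (by simp [Xor', hj])
  · obtain rfl := eq_three i hi
    obtain rfl := eq_three j hj
    exact iff_of_false (by simpa using not_isHamCycleSet_cubeFactor 3) (by simp [Xor'])
end

section
/- Let d ≥ 3 and let M = {M_1, …, M_d} be a 1-factorization of the hypercube Q_d. Suppose x, y, v, w is a 4-cycle in Q_d with edges xy and vw in matching M_s and edges vy and xw in matching M_t (s ≠ t), and let M' be the 1-factorization obtained from M by the switch on this 4-cycle, i.e. M'_s = (M_s ∪ {vy, xw}) \ {xy, vw}, M'_t = (M_t ∪ {xy, vw}) \ {vy, xw}, and M'_i = M_i for i ≠ s, t. Then sign(M') = sign(M). -/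
open SimpleGraph

/-- The even vertices of `Q_d`. -/
abbrev EvenVertex (d : ℕ) := {v : Finset (Fin d) // Even v.card}

/-- The odd vertices of `Q_d`. -/
abbrev OddVertex (d : ℕ) := {v : Finset (Fin d) // ¬ Even v.card}

/-- The bijection `f` from the odd vertices to the even vertices represents the perfect
matching `M`: it sends every odd vertex to its partner in `M`. -/
def Represents {d : ℕ} (M : Set (Sym2 (Finset (Fin d)))) (f : OddVertex d ≃ EvenVertex d) : Prop :=
  ∀ x : OddVertex d, s(x.val, (f x).val) ∈ M

/-- The sign of a 1-factorization, given as the family of bijections (odd → even)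
representing its matchings: the product over all pairs `i < j` of the signs of the
permutations `M_i ∘ M_j⁻¹` of the even vertices. -/
noncomputable def factorizationSign {d : ℕ} (f : Fin d → (OddVertex d ≃ EvenVertex d)) : ℤˣ :=
  ∏ p ∈ Finset.univ.filter (fun p : Fin d × Fin d => p.1 < p.2),
    Equiv.Perm.sign ((f p.2).symm.trans (f p.1))

open Finset

/-! Say `x` is even. The switch replaces the bijections representing `M_s` and `M_t` by their
composites with the transposition `(x v)` of even vertices and leaves the others alone.
Composing each `M_i` with a permutation `g_i` multiplies `sgn (M_i ∘ M_j⁻¹)` by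
`sgn g_i · sgn g_j`, hence the sign of the factorization by `(∏ sgn g_i) ^ (d - 1)`, which here
is `sgn (x v) ^ (2 (d - 1)) = 1`. -/

theorem Finset.prod_filter_lt_mul_eq_prod_pow {ι M : Type*} [Fintype ι] [LinearOrder ι]
    [CommMonoid M] (a : ι → M) :
    ∏ p ∈ univ.filter (fun p : ι × ι => p.1 < p.2), a p.1 * a p.2 =
      ∏ i, a i ^ (Fintype.card ι - 1) := by
  have hswap : ∏ p ∈ univ.filter (fun p : ι × ι => p.1 < p.2), a p.2 =
      ∏ p ∈ univ.filter (fun p : ι × ι => ¬ p.1 ≤ p.2), a p.1 :=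
    prod_nbij' Prod.swap Prod.swap (by simp) (by simp) (by simp) (by simp) (by simp)
  have hne (i : ι) :
      ∏ j ∈ univ.filter (fun j => i ≠ j), a i = a i ^ (Fintype.card ι - 1) := by
    rw [prod_const, filter_ne, card_erase_of_mem (mem_univ i), card_univ]
  calc ∏ p ∈ univ.filter (fun p : ι × ι => p.1 < p.2), a p.1 * a p.2
      = ∏ p ∈ univ.filter (fun p : ι × ι => p.1 ≠ p.2), a p.1 := by
        rw [prod_mul_distrib, hswap, ← prod_filter_mul_prod_filter_not
          (univ.filter fun p : ι × ι => p.1 ≠ p.2) (fun p => p.1 ≤ p.2), filter_filter,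
          filter_filter]
        congr 2 with p
        · simp [lt_iff_le_and_ne, and_comm]
        · simpa using ne_of_gt
    _ = ∏ i, a i ^ (Fintype.card ι - 1) := by
        rw [prod_filter, Fintype.prod_prod_type]
        simp only [← prod_filter, hne]

theorem factorizationSign_trans {d : ℕ} (f : Fin d → (OddVertex d ≃ EvenVertex d))
    (g : Fin d → Equiv.Perm (EvenVertex d)) :
    factorizationSign (fun i => (f i).trans (g i)) =
      factorizationSign f * (∏ i, Equiv.Perm.sign (g i)) ^ (d - 1) := by
  have hpair (i j : Fin d) :
      Equiv.Perm.sign (((f j).trans (g j)).symm.trans ((f i).trans (g i))) =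
        Equiv.Perm.sign ((f j).symm.trans (f i)) *
          (Equiv.Perm.sign (g i) * Equiv.Perm.sign (g j)) := by
    rw [show ((f j).trans (g j)).symm.trans ((f i).trans (g i)) =
        (g j).symm.trans (((f j).symm.trans (f i)).trans (g i)) from Equiv.ext fun _ => rfl,
      Equiv.Perm.sign_trans, Equiv.Perm.sign_trans, Equiv.Perm.sign_symm]
    ac_rfl
  simp only [factorizationSign, hpair]
  rw [prod_mul_distrib, Finset.prod_filter_lt_mul_eq_prod_pow (fun i => Equiv.Perm.sign (g i)),
    Fintype.card_fin, prod_pow]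

theorem factorizationSign_eq_of_eq_trans {d : ℕ} {f f' : Fin d → (OddVertex d ≃ EvenVertex d)}
    {s t : Fin d} (hst : s ≠ t) {σ : Equiv.Perm (EvenVertex d)}
    (hs : f' s = (f s).trans σ) (ht : f' t = (f t).trans σ)
    (hother : ∀ i, i ≠ s → i ≠ t → f' i = f i) :
    factorizationSign f' = factorizationSign f := by
  set g : Fin d → Equiv.Perm (EvenVertex d) := fun i => if i = s ∨ i = t then σ else 1
  have hf' : f' = fun i => (f i).trans (g i) := by
    funext i
    by_cases hi : i = s ∨ i = t
    · rcases hi with rfl | rfl <;> simp [g, hs, ht]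
    · push Not at hi
      simp [g, hother i hi.1 hi.2, hi.1, hi.2, Equiv.Perm.one_def]
  rw [hf', factorizationSign_trans,
    Fintype.prod_eq_mul (f := fun i => Equiv.Perm.sign (g i)) s t hst fun i hi => by
      simp [g, hi.1, hi.2]]
  simp [g, Int.units_mul_self]

theorem IsPM.eq_of_mem {V : Type*} {G : SimpleGraph V} {M : Set (Sym2 V)} (h : IsPM G M)
    {e e' : Sym2 V} {v : V} (he : e ∈ M) (hv : v ∈ e) (he' : e' ∈ M) (hv' : v ∈ e') :
    e = e' :=
  (h.2 v).unique ⟨he, hv⟩ ⟨he', hv'⟩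

section Represents

variable {d : ℕ} {G : SimpleGraph (Finset (Fin d))} {M : Set (Sym2 (Finset (Fin d)))}
  {f : OddVertex d ≃ EvenVertex d}

theorem Represents.val_apply_eq (hM : IsPM G M) (hf : Represents M f) {z : OddVertex d}
    {b : Finset (Fin d)} (hb : s(z.val, b) ∈ M) : (f z).val = b :=
  Sym2.congr_right.mp (hM.eq_of_mem (hf z) (Sym2.mem_mk_left _ _) hb (Sym2.mem_mk_left _ _))

theorem Represents.unique (hM : IsPM G M) (hf : Represents M f) {g : OddVertex d ≃ EvenVertex d}
    (hg : Represents M g) : f = g :=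
  Equiv.ext fun z => Subtype.ext (hf.val_apply_eq hM (hg z))

theorem Represents.eq_trans_swap_of_switch (hM : IsPM G M) (hf : Represents M f)
    {M' : Set (Sym2 (Finset (Fin d)))} {f' : OddVertex d ≃ EvenVertex d} (hf' : Represents M' f')
    {a b : EvenVertex d} {Y W : OddVertex d} (haY : s(a.val, Y.val) ∈ M)
    (hbW : s(b.val, W.val) ∈ M)
    (hswitch :
      M' = (M ∪ {s(b.val, Y.val), s(a.val, W.val)}) \ {s(a.val, Y.val), s(b.val, W.val)}) :
    f' = f.trans (Equiv.swap a b) := by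
  have hfY : f Y = a := Subtype.ext (hf.val_apply_eq hM (Sym2.eq_swap ▸ haY))
  have hfW : f W = b := Subtype.ext (hf.val_apply_eq hM (Sym2.eq_swap ▸ hbW))
  ext z
  obtain ⟨hz | hz | hz, hz_ne⟩ := hswitch ▸ hf' z
  · have hfz : f' z = f z := Subtype.ext (hf.val_apply_eq hM hz).symm
    have hzY : z ≠ Y := by
      rintro rfl
      exact hz_ne (by simp [hfz, hfY, Sym2.eq_swap])
    have hzW : z ≠ W := by
      rintro rfl
      exact hz_ne (by simp [hfz, hfW, Sym2.eq_swap])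
    rw [Equiv.trans_apply, Equiv.swap_apply_of_ne_of_ne (hfY ▸ f.injective.ne hzY)
      (hfW ▸ f.injective.ne hzW), hfz]
  · rcases Sym2.eq_iff.mp hz with ⟨hzb, -⟩ | ⟨hzY, hfz⟩
    · exact absurd (hzb ▸ b.2) z.2
    · obtain rfl : z = Y := Subtype.ext hzY
      rw [hfz, Equiv.trans_apply, hfY, Equiv.swap_apply_left]
  · rcases Sym2.eq_iff.mp hz with ⟨hza, -⟩ | ⟨hzW, hfz⟩
    · exact absurd (hza ▸ a.2) z.2
    · obtain rfl : z = W := Subtype.ext hzW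
      rw [hfz, Equiv.trans_apply, hfW, Equiv.swap_apply_right]

end Represents

theorem cube_adj_even_card_iff {d : ℕ} {u v : Finset (Fin d)} (h : (cube d).Adj u v) :
    Even u.card ↔ ¬ Even v.card := by
  have hcard : (symmDiff u v).card = 1 := h
  rw [symmDiff_eq_sup_sdiff_inf, sup_eq_union, inf_eq_inter,
    card_sdiff_of_subset inter_subset_union] at hcard
  have := card_union_add_card_inter u v
  have := card_le_card (inter_subset_union (s := u) (t := v))
  rw [Nat.even_iff, Nat.even_iff]
  omega

theorem statement12_general (d : ℕ)
    (M M' : Fin d → Set (Sym2 (Finset (Fin d))))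
    (hM : IsFactorization (cube d) M)
    (s t : Fin d) (hst : s ≠ t)
    (x y v w : Finset (Fin d))
    (hxy : (cube d).Adj x y) (hyv : (cube d).Adj y v)
    (hvw : (cube d).Adj v w)
    (hxyM : s(x, y) ∈ M s) (hvwM : s(v, w) ∈ M s)
    (hvyM : s(v, y) ∈ M t) (hxwM : s(x, w) ∈ M t)
    (hM's : M' s = (M s ∪ {s(v, y), s(x, w)}) \ {s(x, y), s(v, w)})
    (hM't : M' t = (M t ∪ {s(x, y), s(v, w)}) \ {s(v, y), s(x, w)})
    (hM'i : ∀ i, i ≠ s → i ≠ t → M' i = M i)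
    (f f' : Fin d → (OddVertex d ≃ EvenVertex d))
    (hf : ∀ i, Represents (M i) (f i)) (hf' : ∀ i, Represents (M' i) (f' i)) :
    factorizationSign f' = factorizationSign f := by
  obtain ⟨σ, hs, ht⟩ : ∃ σ : Equiv.Perm (EvenVertex d),
      f' s = (f s).trans σ ∧ f' t = (f t).trans σ := by
    by_cases hx : Even x.card
    · have hy := (cube_adj_even_card_iff hxy).mp hx
      have hv := (cube_adj_even_card_iff hyv.symm).mpr hy
      have hw := (cube_adj_even_card_iff hvw).mp hv
      refine ⟨Equiv.swap ⟨x, hx⟩ ⟨v, hv⟩, ?_, ?_⟩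
      · exact (hf s).eq_trans_swap_of_switch (hM.1 s) (hf' s) (Y := ⟨y, hy⟩) (W := ⟨w, hw⟩)
          hxyM hvwM hM's
      · rw [Equiv.swap_comm]
        exact (hf t).eq_trans_swap_of_switch (hM.1 t) (hf' t) (Y := ⟨y, hy⟩) (W := ⟨w, hw⟩)
          hvyM hxwM hM't
    · have hy := (cube_adj_even_card_iff hxy.symm).mpr hx
      have hv := (cube_adj_even_card_iff hyv).mp hy
      have hw := (cube_adj_even_card_iff hvw.symm).mpr hv
      refine ⟨Equiv.swap ⟨y, hy⟩ ⟨w, hw⟩, ?_, ?_⟩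
      · exact (hf s).eq_trans_swap_of_switch (hM.1 s) (hf' s) (Y := ⟨x, hx⟩) (W := ⟨v, hv⟩)
          (Sym2.eq_swap ▸ hxyM) (Sym2.eq_swap ▸ hvwM)
          (by simp only [hM's, Sym2.eq_swap, Set.pair_comm])
      · rw [Equiv.swap_comm]
        exact (hf t).eq_trans_swap_of_switch (hM.1 t) (hf' t) (Y := ⟨x, hx⟩) (W := ⟨v, hv⟩)
          (Sym2.eq_swap ▸ hxwM) (Sym2.eq_swap ▸ hvyM)
          (by simp only [hM't, Sym2.eq_swap, Set.pair_comm])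
  exact factorizationSign_eq_of_eq_trans hst hs ht fun i his hit =>
    (hf' i).unique (hM'i i his hit ▸ hM.1 i) (hM'i i his hit ▸ hf i)

/-- A switch on a 4-cycle preserves the sign of a 1-factorization of `Q_d`. -/
theorem statement12 (d : ℕ) (hd : 3 ≤ d)
    (M M' : Fin d → Set (Sym2 (Finset (Fin d))))
    (hM : IsFactorization (cube d) M)
    (s t : Fin d) (hst : s ≠ t)
    (x y v w : Finset (Fin d))
    (hxy : (cube d).Adj x y) (hyv : (cube d).Adj y v)
    (hvw : (cube d).Adj v w) (hwx : (cube d).Adj w x)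
    (hxv : x ≠ v) (hyw : y ≠ w)
    (hxyM : s(x, y) ∈ M s) (hvwM : s(v, w) ∈ M s)
    (hvyM : s(v, y) ∈ M t) (hxwM : s(x, w) ∈ M t)
    (hM's : M' s = (M s ∪ {s(v, y), s(x, w)}) \ {s(x, y), s(v, w)})
    (hM't : M' t = (M t ∪ {s(x, y), s(v, w)}) \ {s(v, y), s(x, w)})
    (hM'i : ∀ i, i ≠ s → i ≠ t → M' i = M i)
    (f f' : Fin d → (OddVertex d ≃ EvenVertex d))
    (hf : ∀ i, Represents (M i) (f i)) (hf' : ∀ i, Represents (M' i) (f' i)) :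
    factorizationSign f' = factorizationSign f :=
  statement12_general d M M' hM s t hst x y v w hxy hyv hvw hxyM hvwM hvyM hxwM hM's hM't hM'i f f'
    hf hf'
end

section
/- The hypercube Q_3 has exactly four partitions of its edge set into perfect matchings (counted as unordered sets of matchings): one consists of the three directional matchings, and each of the other three contains exactly one directional matching. -/
open SimpleGraph

/-- The directional matching `D_i` of `Q_d`: all edges in direction `i`, i.e. whose
endpoints differ exactly in the element `i`. -/
def dirMatching (d : ℕ) (i : Fin d) : Set (Sym2 (Finset (Fin d))) :=
  {e | ∃ u v : Finset (Fin d), e = s(u, v) ∧ symmDiff u v = {i}}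

/-- The edge set `M` only uses edges in directions belonging to `S`. -/
def UsesDirections {d : ℕ} (M : Set (Sym2 (Finset (Fin d)))) (S : Set (Fin d)) : Prop :=
  ∀ u v : Finset (Fin d), s(u, v) ∈ M → ∀ i ∈ symmDiff u v, i ∈ S

/-- A 1-factorization of `Q_{k+l}` is direction respecting (w.r.t. the split `k + l`)
if the first `k` matchings use only the first `k` directions and the last `l` matchings
use only the last `l` directions. -/
def DirectionRespecting (k l : ℕ) (M : Fin (k + l) → Set (Sym2 (Finset (Fin (k + l))))) : Prop :=
  ∀ i : Fin (k + l), UsesDirections (M i) {j : Fin (k + l) | ((j : ℕ) < k ↔ (i : ℕ) < k)}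

/-- An unordered 1-factorization of `G`: a collection of perfect matchings which
partitions the edge set of `G`. -/
def IsUnorderedFactorization {V : Type*} (G : SimpleGraph V) (F : Set (Set (Sym2 V))) : Prop :=
  (∀ M ∈ F, IsPM G M) ∧ (∀ M ∈ F, ∀ N ∈ F, M ≠ N → Disjoint M N) ∧ ⋃₀ F = G.edgeSet

/-! Every perfect matching of a finite graph is a finite edge set, so the 1-factorizations of `G`
are exactly the families of perfect matchings, viewed as finsets, in which every edge of `G` lies in
exactly one member. For `Q₃` (12 edges, 9 perfect matchings) this makes the theorem a finite
computation, which the kernel carries out. -/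

open Finset

theorem Finset.card_filter_eq_one_iff_existsUnique {α : Type*} {s : Finset α} {p : α → Prop}
    [DecidablePred p] : #{x ∈ s | p x} = 1 ↔ ∃! x, x ∈ s ∧ p x := by
  simp only [card_eq_one_iff_existsUnique, mem_filter]

theorem pairwiseDisjoint_sUnion_eq_iff_existsUnique {α : Type*} {F : Set (Set α)} {E : Set α}
    (hF : ∀ M ∈ F, M ⊆ E) :
    ((∀ M ∈ F, ∀ N ∈ F, M ≠ N → Disjoint M N) ∧ ⋃₀ F = E) ↔ ∀ a ∈ E, ∃! M, M ∈ F ∧ a ∈ M := by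
  constructor
  · rintro ⟨hdisj, hcover⟩ a ha
    obtain ⟨M, hM, haM⟩ := hcover ▸ ha
    refine ⟨M, ⟨hM, haM⟩, fun N ⟨hN, haN⟩ => ?_⟩
    by_contra hNM
    exact Set.disjoint_left.1 (hdisj N hN M hM hNM) haN haM
  · intro huniq
    refine ⟨fun M hM N hN hMN => Set.disjoint_left.2 fun a haM haN => hMN ?_, ?_⟩
    · exact (huniq a (hF M hM haM)).unique ⟨hM, haM⟩ ⟨hN, haN⟩
    · refine (Set.sUnion_subset hF).antisymm fun a ha => ?_
      obtain ⟨M, ⟨hM, haM⟩, -⟩ := huniq a ha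
      exact ⟨M, hM, haM⟩

def setFamily {α : Type*} (S : Finset (Finset α)) : Set (Set α) :=
  (fun M : Finset α => (M : Set α)) '' S

section setFamily

variable {α : Type*}

theorem setFamily_injective : Function.Injective (setFamily (α := α)) :=
  (Set.image_injective.2 coe_injective).comp coe_injective

theorem ncard_setFamily (S : Finset (Finset α)) : (setFamily S).ncard = #S := by
  rw [setFamily, Set.ncard_image_of_injective _ coe_injective, Set.ncard_coe_finset]

theorem setFamily_inter [DecidableEq α] (S T : Finset (Finset α)) :
    setFamily (S ∩ T) = setFamily S ∩ setFamily T := by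
  rw [setFamily, setFamily, setFamily, coe_inter, Set.image_inter coe_injective]

theorem exists_setFamily_eq [Fintype α] (F : Set (Set α)) : ∃ S, setFamily S = F := by
  classical
  refine ⟨univ.filter fun N => (N : Set α) ∈ F,
    Set.ext fun M => ⟨?_, fun hM => ⟨M.toFinite.toFinset, ?_, ?_⟩⟩⟩
  · rintro ⟨N, hN, rfl⟩
    simpa using hN
  · simpa using hM
  · simp

theorem existsUnique_mem_setFamily_iff [DecidableEq α] (S : Finset (Finset α)) (a : α) :
    (∃! M, M ∈ setFamily S ∧ a ∈ M) ↔ #{M ∈ S | a ∈ M} = 1 := by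
  rw [card_filter_eq_one_iff_existsUnique]
  constructor
  · rintro ⟨_, ⟨⟨N, hN, rfl⟩, haN⟩, huniq⟩
    exact ⟨N, ⟨hN, haN⟩, fun N' hN' => coe_injective (huniq _ ⟨⟨N', hN'.1, rfl⟩, hN'.2⟩)⟩
  · rintro ⟨N, ⟨hN, haN⟩, huniq⟩
    refine ⟨N, ⟨⟨N, hN, rfl⟩, haN⟩, ?_⟩
    rintro _ ⟨⟨N', hN', rfl⟩, haN'⟩
    rw [huniq N' ⟨hN', haN'⟩]

end setFamily

section FiniteGraph

variable {V : Type*} [Fintype V] [DecidableEq V] (G : SimpleGraph V) [DecidableRel G.Adj]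

def perfectMatchingFinset : Finset (Finset (Sym2 V)) :=
  {M ∈ G.edgeFinset.powerset | ∀ v, #{e ∈ M | v ∈ e} = 1}

def factorizationFinset : Finset (Finset (Finset (Sym2 V))) :=
  {S ∈ (perfectMatchingFinset G).powerset | ∀ e ∈ G.edgeFinset, #{M ∈ S | e ∈ M} = 1}

variable {G}

theorem isPM_coe_iff {M : Finset (Sym2 V)} : IsPM G M ↔ M ∈ perfectMatchingFinset G := by
  simp only [IsPM, perfectMatchingFinset, mem_filter, mem_powerset, ← coe_edgeFinset, coe_subset,
    mem_coe, card_filter_eq_one_iff_existsUnique]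

theorem isUnorderedFactorization_setFamily_iff {S : Finset (Finset (Sym2 V))} :
    IsUnorderedFactorization G (setFamily S) ↔ S ∈ factorizationFinset G := by
  have hPM : (∀ M ∈ setFamily S, IsPM G M) ↔ S ⊆ perfectMatchingFinset G := by
    simp only [setFamily, Set.forall_mem_image, mem_coe, isPM_coe_iff, subset_iff]
  rw [IsUnorderedFactorization, factorizationFinset, mem_filter, mem_powerset, ← hPM]
  refine and_congr_right fun hS => ?_
  rw [pairwiseDisjoint_sUnion_eq_iff_existsUnique fun M hM => (hS M hM).1]
  simp only [← coe_edgeFinset, mem_coe, existsUnique_mem_setFamily_iff]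

theorem setOf_isUnorderedFactorization :
    {F | IsUnorderedFactorization G F} = setFamily '' factorizationFinset G := by
  ext F
  obtain ⟨S, rfl⟩ := exists_setFamily_eq F
  simp only [Set.mem_ofPred_eq, isUnorderedFactorization_setFamily_iff,
    setFamily_injective.mem_set_image, mem_coe]

end FiniteGraph

instance inst_s17 (d : ℕ) : DecidableRel (cube d).Adj := fun u v =>
  inferInstanceAs (Decidable (#(symmDiff u v) = 1))

def dirMatchingFinset (d : ℕ) (i : Fin d) : Finset (Sym2 (Finset (Fin d))) :=
  univ.image fun u => s(u, symmDiff u {i})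

def dirFamily (d : ℕ) : Finset (Finset (Sym2 (Finset (Fin d)))) :=
  univ.image (dirMatchingFinset d)

theorem dirMatching_eq_coe (d : ℕ) (i : Fin d) : dirMatching d i = dirMatchingFinset d i := by
  ext e
  simp only [dirMatching, dirMatchingFinset, coe_image, coe_univ, Set.image_univ]
  constructor
  · rintro ⟨u, v, rfl, huv⟩
    exact ⟨u, by beta_reduce; rw [← huv, symmDiff_symmDiff_cancel_left]⟩
  · rintro ⟨u, rfl⟩
    exact ⟨u, _, rfl, symmDiff_symmDiff_cancel_left u {i}⟩

theorem range_dirMatching (d : ℕ) : Set.range (dirMatching d) = setFamily (dirFamily d) := by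
  rw [setFamily, dirFamily, coe_image, coe_univ, Set.image_univ, ← Set.range_comp]
  exact congrArg Set.range (funext (dirMatching_eq_coe d))

theorem card_factorizationFinset_cube_three : #(factorizationFinset (cube 3)) = 4 := by
  decide +kernel

theorem filter_card_inter_dirFamily_ne_one :
    {S ∈ factorizationFinset (cube 3) | #(S ∩ dirFamily 3) ≠ 1} = {dirFamily 3} := by
  decide +kernel

theorem dirFamily_mem_factorizationFinset : dirFamily 3 ∈ factorizationFinset (cube 3) :=
  (mem_filter.1 (filter_card_inter_dirFamily_ne_one ▸ mem_singleton_self (dirFamily 3))).1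

theorem card_inter_dirFamily_eq_one {S : Finset (Finset (Sym2 (Finset (Fin 3))))}
    (hS : S ∈ factorizationFinset (cube 3)) (hne : S ≠ dirFamily 3) : #(S ∩ dirFamily 3) = 1 := by
  by_contra hcard
  exact hne (mem_singleton.1 (filter_card_inter_dirFamily_ne_one ▸ mem_filter.2 ⟨hS, hcard⟩))

/-- `Q₃` has exactly four 1-factorizations (as unordered collections of matchings):
one of them is the set of the three directional matchings, and each of the other three
contains exactly one directional matching. -/
theorem statement17 :
    {F : Set (Set (Sym2 (Finset (Fin 3)))) | IsUnorderedFactorization (cube 3) F}.ncard = 4 ∧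
    IsUnorderedFactorization (cube 3) (Set.range (dirMatching 3)) ∧
    ∀ F : Set (Set (Sym2 (Finset (Fin 3)))),
      IsUnorderedFactorization (cube 3) F → F ≠ Set.range (dirMatching 3) →
        {N ∈ F | ∃ i, N = dirMatching 3 i}.ncard = 1 := by
  refine ⟨?_, ?_, ?_⟩
  · rw [setOf_isUnorderedFactorization, Set.ncard_image_of_injective _ setFamily_injective,
      Set.ncard_coe_finset, card_factorizationFinset_cube_three]
  · rw [range_dirMatching, isUnorderedFactorization_setFamily_iff]
    exact dirFamily_mem_factorizationFinset
  · intro F hF hne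
    obtain ⟨S, rfl⟩ := exists_setFamily_eq F
    rw [range_dirMatching, ne_eq, setFamily_injective.eq_iff] at hne
    have hsep : {N ∈ setFamily S | ∃ i, N = dirMatching 3 i} = setFamily (S ∩ dirFamily 3) := by
      rw [setFamily_inter, ← range_dirMatching]
      ext N
      exact and_congr_right fun _ => exists_congr fun _ => eq_comm
    rw [hsep, ncard_setFamily]
    exact card_inter_dirFamily_eq_one (isUnorderedFactorization_setFamily_iff.1 hF) hne
end
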